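/- arXiv:math/0701291 — 6 statements merged into one kernel-verified Lean document; each statement's English description precedes it below -/
import Mathlib

section
/- Let q be a prime power, F_q the finite field with q elements, A = F_q[T], and for nonzero n ∈ A write |n| = q^{deg n}. Let Λ be a free A-module of rank r ≥ 1 and let n ∈ A be monic and nonconstant or constant nonzero. Then the number of A-submodules Λ̃ ⊆ Λ with Λ/Λ̃ isomorphic (as A-module) to A/nA equals |n|^{r-1} · ∏_{p | n} (|p|^r − 1)/(|p|^r − |p|^{r-1}), where the product runs over the monic irreducible divisors p of n. -/
/-!
A sublattice `N ⊆ M` together with an isomorphism `M ⧸ N ≃ R`, `R = A ⧸ (n)`, is the same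
thing as a surjection `M → R`, and the isomorphisms for a fixed `N` form a torsor under
`Aut_A R = Rˣ`. In a basis of `M` the surjections are the unimodular `r`-tuples over `R`.
By the Chinese remainder theorem `R` is the product of the local rings `S = A ⧸ (p ^ e)`,
`p ∣ n`, and in a finite local ring with maximal ideal `m` and residue field `k` a tuple is
unimodular iff it does not lie in `m ^ r`: there are `|S| ^ r - |m| ^ r` unimodular tuples and
`|S| - |m|` units, while `|S| = |m| |k|` and `|k| = |p|`.
-/

open Polynomial UniqueFactorizationMonoid IsLocalRing

section Surjections

variable {A M R : Type*} [Ring A] [AddCommGroup M] [Module A M] [AddCommGroup R] [Module A R]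

noncomputable def quotientsProdAutEquivSurjections :
    {N : Submodule A M // Nonempty ((M ⧸ N) ≃ₗ[A] R)} × (R ≃ₗ[A] R) ≃
      {f : M →ₗ[A] R // Function.Surjective f} :=
  Equiv.ofBijective
    (fun P => ⟨P.2.toLinearMap ∘ₗ P.1.2.some.toLinearMap ∘ₗ P.1.1.mkQ,
      P.2.surjective.comp (P.1.2.some.surjective.comp P.1.1.mkQ_surjective)⟩)
    ⟨by
      rintro ⟨⟨N, hN⟩, u⟩ ⟨⟨N', hN'⟩, u'⟩ h
      have h' := congrArg Subtype.val h
      obtain rfl : N = N' := by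
        simpa [LinearMap.ker_comp, Submodule.ker_mkQ] using congrArg LinearMap.ker h'
      obtain rfl : u = u' :=
        LinearEquiv.toLinearMap_injective <| (LinearMap.cancel_right
          (g := hN.some.toLinearMap ∘ₗ N.mkQ)
          (hN.some.surjective.comp N.mkQ_surjective)).mp h'
      rfl,
    fun ⟨f, hf⟩ => by
      let e := f.quotKerEquivOfSurjective hf
      let N : {N : Submodule A M // Nonempty ((M ⧸ N) ≃ₗ[A] R)} :=
        ⟨LinearMap.ker f, ⟨e⟩⟩
      refine ⟨⟨N, N.2.some.symm.trans e⟩, ?_⟩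
      ext m
      simp [N, e, LinearMap.quotKerEquivOfSurjective_apply_mk]⟩

theorem card_quotients_mul_card_aut :
    Nat.card {N : Submodule A M // Nonempty ((M ⧸ N) ≃ₗ[A] R)} * Nat.card (R ≃ₗ[A] R) =
      Nat.card {f : M →ₗ[A] R // Function.Surjective f} := by
  rw [← Nat.card_prod]
  exact Nat.card_congr quotientsProdAutEquivSurjections

end Surjections

section SurjectiveAlgebraMap

variable {A S : Type*} [CommRing A] [CommRing S] [Algebra A S]

theorem LinearMap.apply_eq_mul_apply_one_of_surjective (h : Function.Surjective (algebraMap A S))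
    (f : S →ₗ[A] S) (x : S) : f x = x * f 1 := by
  obtain ⟨a, rfl⟩ := h x
  rw [Algebra.algebraMap_eq_smul_one, map_smul, smul_mul_assoc, one_mul]

noncomputable def linearEquivSelfEquivUnits (h : Function.Surjective (algebraMap A S)) :
    (S ≃ₗ[A] S) ≃ Sˣ where
  toFun f :=
    have hinv : f.symm 1 * f 1 = 1 :=
      (f.toLinearMap.apply_eq_mul_apply_one_of_surjective h _).symm.trans (f.apply_symm_apply 1)
    ⟨f 1, f.symm 1, by rwa [mul_comm], hinv⟩
  invFun u := DistribMulAction.toLinearEquiv A S u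
  left_inv f := by
    ext x
    simpa [mul_comm] using (f.toLinearMap.apply_eq_mul_apply_one_of_surjective h x).symm
  right_inv u := by ext; simp [Units.smul_def]

theorem Submodule.span_range_eq_top_iff_ideal_span (h : Function.Surjective (algebraMap A S))
    {ι : Type*} (v : ι → S) :
    Submodule.span A (Set.range v) = ⊤ ↔ Ideal.span (Set.range v) = ⊤ := by
  rw [← Submodule.restrictScalars_span A S h, Submodule.restrictScalars_eq_top_iff]

end SurjectiveAlgebraMap

section Unimodular

theorem Module.Basis.surjective_constr_iff {ι A M R : Type*} [CommSemiring A]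
    [AddCommMonoid M] [Module A M] [AddCommMonoid R] [Module A R] (b : Module.Basis ι A M)
    (v : ι → R) :
    Function.Surjective (b.constr A v) ↔ Submodule.span A (Set.range v) = ⊤ := by
  rw [← LinearMap.range_eq_top, Module.Basis.constr_range]

noncomputable def Module.Basis.surjectionsEquiv {ι A M R : Type*} [CommSemiring A]
    [AddCommMonoid M] [Module A M] [AddCommMonoid R] [Module A R] (b : Module.Basis ι A M) :
    {v : ι → R // Submodule.span A (Set.range v) = ⊤} ≃
      {f : M →ₗ[A] R // Function.Surjective f} :=
  (b.constr A).toEquiv.subtypeEquiv fun v => (b.surjective_constr_iff v).symm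

variable {ι S : Type*} [Fintype ι] [CommRing S]

theorem Ideal.span_range_eq_top_iff_exists_sum (v : ι → S) :
    Ideal.span (Set.range v) = ⊤ ↔ ∃ c : ι → S, ∑ j, c j * v j = 1 := by
  rw [Ideal.eq_top_iff_one, Ideal.mem_span_range_iff_exists_fun]

theorem RingEquiv.span_range_comp_eq_top_iff {S' : Type*} [CommRing S'] (e : S ≃+* S')
    (v : ι → S) : Ideal.span (Set.range (e ∘ v)) = ⊤ ↔ Ideal.span (Set.range v) = ⊤ := by
  simp only [Ideal.span_range_eq_top_iff_exists_sum]
  constructor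
  · rintro ⟨c, hc⟩
    exact ⟨e.symm ∘ c, by simpa using congrArg e.symm hc⟩
  · rintro ⟨c, hc⟩
    exact ⟨e ∘ c, by simpa using congrArg e hc⟩

theorem Pi.span_range_eq_top_iff {κ : Type*} {T : κ → Type*} [∀ i, CommRing (T i)]
    (v : ι → ∀ i, T i) :
    Ideal.span (Set.range v) = ⊤ ↔ ∀ i, Ideal.span (Set.range fun j => v j i) = ⊤ := by
  simp only [Ideal.span_range_eq_top_iff_exists_sum]
  constructor
  · rintro ⟨c, hc⟩ i
    exact ⟨fun j => c j i, by simpa using congrFun hc i⟩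
  · intro h
    choose c hc using h
    exact ⟨fun j i => c i j, funext fun i => by simpa using hc i⟩

theorem RingEquiv.natCard_unimodular_eq_prod {κ : Type*} [Fintype κ] {T : κ → Type*}
    [∀ i, CommRing (T i)] (e : S ≃+* ∀ i, T i) :
    Nat.card {v : ι → S // Ideal.span (Set.range v) = ⊤} =
      ∏ i, Nat.card {w : ι → T i // Ideal.span (Set.range w) = ⊤} := by
  calc _ = Nat.card {v : ι → ∀ i, T i // Ideal.span (Set.range v) = ⊤} :=
        Nat.card_congr <| (Equiv.piCongrRight fun _ => e.toEquiv).subtypeEquiv fun v =>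
          (e.span_range_comp_eq_top_iff v).symm
    _ = Nat.card {w : ∀ i, ι → T i // ∀ i, Ideal.span (Set.range (w i)) = ⊤} :=
        Nat.card_congr <| (Equiv.piComm _).subtypeEquiv Pi.span_range_eq_top_iff
    _ = _ := by
        rw [Nat.card_congr (Equiv.subtypePiEquivPi (p := fun i (w : ι → T i) =>
          Ideal.span (Set.range w) = ⊤)), Nat.card_pi]

end Unimodular

-- At `r = 0` both sides vanish, the truncated `r - 1` notwithstanding, because `k ^ 0 - 1 = 0`.
theorem mul_pow_sub_pow_eq {K : Type*} [Field K] {k : K} (hk0 : k ≠ 0) (hk1 : k ≠ 1) (x : K)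
    (r : ℕ) : (k * x) ^ r - x ^ r =
      (k * x - x) * (k * x) ^ (r - 1) * ((k ^ r - 1) / (k ^ r - k ^ (r - 1))) := by
  rcases r with _ | r
  · simp
  · have : k ^ (r + 1) - k ^ r ≠ 0 := by
      rw [pow_succ, ← mul_sub_one, ne_eq, mul_eq_zero, not_or]
      exact ⟨pow_ne_zero r hk0, sub_ne_zero.mpr hk1⟩
    simp only [Nat.add_sub_cancel]
    field_simp
    ring

section LocalRing

variable {S : Type*} [CommRing S] [IsLocalRing S]

theorem IsLocalRing.span_range_eq_top_iff {ι : Type*} (v : ι → S) :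
    Ideal.span (Set.range v) = ⊤ ↔ ¬ ∀ j, v j ∈ maximalIdeal S := by
  refine ⟨fun h hv => ?_, fun h => ?_⟩
  · refine (maximalIdeal.isMaximal S).ne_top (top_le_iff.mp ?_)
    rw [← h, Ideal.span_le]
    exact Set.range_subset_iff.mpr hv
  · push Not at h
    obtain ⟨j, hj⟩ := h
    exact Ideal.eq_top_of_isUnit_mem _ (Ideal.subset_span ⟨j, rfl⟩) (notMem_maximalIdeal.mp hj)

theorem IsLocalRing.card_eq_card_maximalIdeal_mul_card_residueField :
    Nat.card S = Nat.card (maximalIdeal S) * Nat.card (ResidueField S) :=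
  Submodule.card_eq_card_quotient_mul_card (maximalIdeal S)

variable [Finite S]

theorem IsLocalRing.card_unimodular_add_card_maximalIdeal_pow {ι : Type*} [Finite ι] :
    Nat.card {v : ι → S // Ideal.span (Set.range v) = ⊤} +
      Nat.card (maximalIdeal S) ^ Nat.card ι = Nat.card S ^ Nat.card ι := by
  classical
  have hcompl : {v : ι → S // ¬ Ideal.span (Set.range v) = ⊤} ≃ (ι → maximalIdeal S) :=
    (Equiv.subtypeEquivRight fun v => by rw [span_range_eq_top_iff, not_not]).trans
      (Equiv.subtypePiEquivPi (p := fun _ x => x ∈ maximalIdeal S))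
  rw [← Nat.card_fun, ← Nat.card_fun, ← Nat.card_congr hcompl, ← Nat.card_sum,
    Nat.card_congr (Equiv.sumCompl _)]

theorem IsLocalRing.card_units_add_card_maximalIdeal :
    Nat.card Sˣ + Nat.card (maximalIdeal S) = Nat.card S := by
  classical
  have hunits : Sˣ ≃ {x : S // ¬ x ∈ maximalIdeal S} :=
    { toFun u := ⟨u, notMem_maximalIdeal.mpr u.isUnit⟩
      invFun x := (notMem_maximalIdeal.mp x.2).unit
      left_inv u := by ext; rfl
      right_inv x := rfl }
  rw [Nat.card_congr hunits, add_comm, ← Nat.card_sum, Nat.card_congr (Equiv.sumCompl _)]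

theorem IsLocalRing.card_unimodular_eq_card_units_mul {ι : Type*} [Finite ι] :
    (Nat.card {v : ι → S // Ideal.span (Set.range v) = ⊤} : ℚ) =
      Nat.card Sˣ * (Nat.card S : ℚ) ^ (Nat.card ι - 1) *
        (((Nat.card (ResidueField S) : ℚ) ^ Nat.card ι - 1) /
          ((Nat.card (ResidueField S) : ℚ) ^ Nat.card ι -
            (Nat.card (ResidueField S) : ℚ) ^ (Nat.card ι - 1))) := by
  have : Finite (ResidueField S) := .of_surjective _ residue_surjective
  have hk : (1 : ℚ) < Nat.card (ResidueField S) := by exact_mod_cast Finite.one_lt_card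
  have hunimod := congrArg (Nat.cast (R := ℚ))
    (card_unimodular_add_card_maximalIdeal_pow (S := S) (ι := ι))
  have hunits := congrArg (Nat.cast (R := ℚ)) (card_units_add_card_maximalIdeal (S := S))
  have hS := congrArg (Nat.cast (R := ℚ))
    (card_eq_card_maximalIdeal_mul_card_residueField (S := S))
  push_cast at hunimod hunits hS
  rw [eq_sub_of_add_eq hunimod, eq_sub_of_add_eq hunits, hS,
    mul_comm (Nat.card (maximalIdeal S) : ℚ)]
  exact mul_pow_sub_pow_eq (by positivity) hk.ne' _ _

end LocalRing

section QuotientPow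

variable {A : Type*} [CommRing A] (P : Ideal A) [P.IsMaximal] {e : ℕ}

theorem Ideal.isLocalRing_quotient_pow (he : e ≠ 0) : IsLocalRing (A ⧸ P ^ e) := by
  have : Nontrivial (A ⧸ P ^ e) := Ideal.Quotient.nontrivial_iff.mpr
    (ne_top_of_le_ne_top ‹P.IsMaximal›.ne_top (Ideal.pow_le_self he))
  refine .of_isUnit_or_isUnit_one_sub_self fun x => ?_
  obtain ⟨a, rfl⟩ := Ideal.Quotient.mk_surjective x
  simp only [← map_one (Ideal.Quotient.mk (P ^ e)), ← map_sub,
    Ideal.Quotient.isUnit_mk_pow_iff_notMem P he]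
  by_contra! h
  exact ‹P.IsMaximal›.ne_top ((Ideal.eq_top_iff_one P).mpr (by simpa using P.add_mem h.1 h.2))

theorem Ideal.maximalIdeal_quotient_pow [IsLocalRing (A ⧸ P ^ e)] (he : e ≠ 0) :
    maximalIdeal (A ⧸ P ^ e) = P.map (Ideal.Quotient.mk (P ^ e)) := by
  ext x
  obtain ⟨a, rfl⟩ := Ideal.Quotient.mk_surjective x
  rw [mem_maximalIdeal, mem_nonunits_iff, Ideal.Quotient.isUnit_mk_pow_iff_notMem P he, not_not,
    Ideal.mem_quotient_iff_mem (Ideal.pow_le_self he)]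

theorem Ideal.natCard_residueField_quotient_pow [IsLocalRing (A ⧸ P ^ e)] (he : e ≠ 0) :
    Nat.card (IsLocalRing.ResidueField (A ⧸ P ^ e)) = Nat.card (A ⧸ P) :=
  Nat.card_congr ((Ideal.quotEquivOfEq (P.maximalIdeal_quotient_pow he)).trans
    (DoubleQuot.quotQuotEquivQuotOfLE (Ideal.pow_le_self he))).toEquiv

end QuotientPow

noncomputable def quotientSpanEquivPiNormalizedFactors {R : Type*} [CommRing R] [IsDomain R]
    [IsPrincipalIdealRing R] [NormalizationMonoid R] [DecidableEq R] {n : R} (hn : n ≠ 0) :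
    R ⧸ Ideal.span {n} ≃+* ∀ p : (normalizedFactors n).toFinset,
      R ⧸ Ideal.span {(p : R)} ^ (normalizedFactors n).count (p : R) :=
  IsDedekindDomain.quotientEquivPiOfFinsetProdEq (Ideal.span {n}) (fun p => Ideal.span {p})
    (fun p => (normalizedFactors n).count p)
    (fun p hp => by
      have hp := prime_of_normalized_factor p (Multiset.mem_toFinset.mp hp)
      exact (Ideal.prime_iff_isPrime (by simpa using hp.ne_zero)).mpr
        ((Ideal.span_singleton_prime hp.ne_zero).mpr hp))
    (fun p hp p' hp' hne hspan => hne (mem_normalizedFactors_eq_of_associated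
      (Multiset.mem_toFinset.mp hp) (Multiset.mem_toFinset.mp hp')
      (Ideal.span_singleton_eq_span_singleton.mp hspan)))
    (by
      simp only [Ideal.span_singleton_pow, Ideal.prod_span_singleton]
      rw [← Finset.prod_multiset_count, Ideal.span_singleton_eq_span_singleton]
      exact prod_normalizedFactors hn)

theorem Polynomial.natCard_quotient_span_singleton {K : Type*} [Field K] {f : K[X]}
    (hf : f ≠ 0) : Nat.card (K[X] ⧸ Ideal.span {f}) = Nat.card K ^ f.natDegree := by
  let pb := AdjoinRoot.powerBasis hf
  have : Module.Finite K (AdjoinRoot f) := pb.finite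
  rw [show (K[X] ⧸ Ideal.span {f}) = AdjoinRoot f from rfl,
    Module.natCard_eq_pow_finrank (K := K), pb.finrank, AdjoinRoot.powerBasis_dim]

theorem card_submodules_with_quotient_equiv_quotient {A M ι κ : Type*} [CommRing A]
    [AddCommGroup M] [Module A M] [Fintype ι] (b : Module.Basis ι A M) (I : Ideal A)
    [Fintype κ] {S : κ → Type*} [∀ i, CommRing (S i)] [∀ i, IsLocalRing (S i)]
    [∀ i, Finite (S i)] (e : A ⧸ I ≃+* ∀ i, S i) :
    (Nat.card {N : Submodule A M // Nonempty ((M ⧸ N) ≃ₗ[A] (A ⧸ I))} : ℚ) =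
      (Nat.card (A ⧸ I) : ℚ) ^ (Nat.card ι - 1) *
        ∏ i, (((Nat.card (ResidueField (S i)) : ℚ) ^ Nat.card ι - 1) /
          ((Nat.card (ResidueField (S i)) : ℚ) ^ Nat.card ι -
            (Nat.card (ResidueField (S i)) : ℚ) ^ (Nat.card ι - 1))) := by
  have hmk : Function.Surjective (algebraMap A (A ⧸ I)) := Ideal.Quotient.mk_surjective
  have hcount : Nat.card {N : Submodule A M // Nonempty ((M ⧸ N) ≃ₗ[A] (A ⧸ I))} *
      ∏ i, Nat.card (S i)ˣ =
        ∏ i, Nat.card {w : ι → S i // Ideal.span (Set.range w) = ⊤} :=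
    calc _ = Nat.card {N : Submodule A M // Nonempty ((M ⧸ N) ≃ₗ[A] (A ⧸ I))} *
          Nat.card ((A ⧸ I) ≃ₗ[A] (A ⧸ I)) := by
          rw [Nat.card_congr (linearEquivSelfEquivUnits hmk),
            Nat.card_congr (Units.mapEquiv e.toMulEquiv).toEquiv,
            Nat.card_congr MulEquiv.piUnits.toEquiv, Nat.card_pi]
      _ = Nat.card {f : M →ₗ[A] A ⧸ I // Function.Surjective f} := card_quotients_mul_card_aut
      _ = Nat.card {v : ι → A ⧸ I // Ideal.span (Set.range v) = ⊤} :=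
          Nat.card_congr <| b.surjectionsEquiv.symm.trans
            (Equiv.subtypeEquivRight (Submodule.span_range_eq_top_iff_ideal_span hmk))
      _ = _ := e.natCard_unimodular_eq_prod
  have hcard : Nat.card (A ⧸ I) = ∏ i, Nat.card (S i) := by
    rw [Nat.card_congr e.toEquiv, Nat.card_pi]
  have hunits : (∏ i, Nat.card (S i)ˣ : ℚ) ≠ 0 :=
    Finset.prod_ne_zero_iff.mpr fun i _ => by exact_mod_cast Nat.card_pos.ne'
  rw [← mul_left_inj' hunits, ← Nat.cast_prod, ← Nat.cast_mul, hcount]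
  simp only [IsLocalRing.card_unimodular_eq_card_units_mul, hcard, Nat.cast_prod,
    Finset.prod_mul_distrib, Finset.prod_pow]
  ring

open scoped Classical in
theorem count_cyclic_sublattices_general
    (Fq : Type*) [Field Fq] [Fintype Fq] (q : ℕ) (hq : Fintype.card Fq = q)
    (r : ℕ)
    (M : Type*) [AddCommGroup M] [Module (Polynomial Fq) M]
    [Module.Free (Polynomial Fq) M] [Module.Finite (Polynomial Fq) M]
    (hrank : Module.finrank (Polynomial Fq) M = r)
    (n : Polynomial Fq) (hn : n.Monic) :
    (Nat.card {N : Submodule (Polynomial Fq) M //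
        Nonempty ((M ⧸ N) ≃ₗ[Polynomial Fq] (Polynomial Fq ⧸ Ideal.span {n}))} : ℚ)
      = ((q : ℚ) ^ n.natDegree) ^ (r - 1) *
        ∏ p ∈ (normalizedFactors n).toFinset,
          ((((q : ℚ) ^ p.natDegree) ^ r - 1) /
            (((q : ℚ) ^ p.natDegree) ^ r - ((q : ℚ) ^ p.natDegree) ^ (r - 1))) := by
  subst hq hrank
  have hmem (p : (normalizedFactors n).toFinset) := Multiset.mem_toFinset.mp p.2
  have hcount (p : (normalizedFactors n).toFinset) :
      (normalizedFactors n).count (p : Fq[X]) ≠ 0 :=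
    Multiset.count_ne_zero.mpr (hmem p)
  have (p : (normalizedFactors n).toFinset) : (Ideal.span {(p : Fq[X])}).IsMaximal :=
    PrincipalIdealRing.isMaximal_of_irreducible (irreducible_of_normalized_factor _ (hmem p))
  have (p : (normalizedFactors n).toFinset) :=
    (Ideal.span {(p : Fq[X])}).isLocalRing_quotient_pow (hcount p)
  let e := quotientSpanEquivPiNormalizedFactors hn.ne_zero
  have : Finite (Fq[X] ⧸ Ideal.span {n}) := Nat.finite_of_card_ne_zero <| by
    rw [natCard_quotient_span_singleton hn.ne_zero]
    exact pow_ne_zero _ Nat.card_pos.ne'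
  have (p : (normalizedFactors n).toFinset) :=
    Finite.of_surjective _ ((Function.surjective_eval p).comp e.surjective)
  rw [card_submodules_with_quotient_equiv_quotient (Module.Free.chooseBasis Fq[X] M) _ e,
    Module.finrank_eq_card_chooseBasisIndex, natCard_quotient_span_singleton hn.ne_zero,
    ← Finset.prod_coe_sort (normalizedFactors n).toFinset]
  simp only [← Nat.card_eq_fintype_card]
  refine congrArg₂ _ (by push_cast; ring) (Finset.prod_congr rfl fun p _ => ?_)
  rw [Ideal.natCard_residueField_quotient_pow _ (hcount p),
    natCard_quotient_span_singleton (prime_of_normalized_factor _ (hmem p)).ne_zero]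
  push_cast
  rfl

open scoped Classical in
theorem count_cyclic_sublattices
    (Fq : Type*) [Field Fq] [Fintype Fq] (q : ℕ) (hq : Fintype.card Fq = q)
    (r : ℕ) (hr : 1 ≤ r)
    (M : Type*) [AddCommGroup M] [Module (Polynomial Fq) M]
    [Module.Free (Polynomial Fq) M] [Module.Finite (Polynomial Fq) M]
    (hrank : Module.finrank (Polynomial Fq) M = r)
    (n : Polynomial Fq) (hn : n.Monic) :
    (Nat.card {N : Submodule (Polynomial Fq) M //
        Nonempty ((M ⧸ N) ≃ₗ[Polynomial Fq] (Polynomial Fq ⧸ Ideal.span {n}))} : ℚ)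
      = ((q : ℚ) ^ n.natDegree) ^ (r - 1) *
        ∏ p ∈ (normalizedFactors n).toFinset,
          ((((q : ℚ) ^ p.natDegree) ^ r - 1) /
            (((q : ℚ) ^ p.natDegree) ^ r - ((q : ℚ) ^ p.natDegree) ^ (r - 1))) :=
  count_cyclic_sublattices_general Fq q hq r M hrank n hn
end

section
/- Let q be a prime power, F_q the finite field with q elements, and A = F_q[T]. Let Λ' be a free A-module of rank r−1, let Λ = Λ' ⊕ A·z be a free A-module of rank r (with z a basis element of the complementary rank-one summand), let n ∈ A be monic nonzero, and let Λ̃ ⊆ Λ be an A-submodule with Λ/Λ̃ isomorphic to A/nA. Then there exist monic polynomials n₁, n₂ ∈ A with n = n₁·n₂ and an element λ ∈ Λ' such that: (i) Λ'/(Λ̃ ∩ Λ') is isomorphic to A/n₂A, and (ii) Λ̃ = (Λ̃ ∩ Λ') ⊕ A·(n₁ z + λ). -/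
open Polynomial Submodule

/-! Let `C = M ⧸ N ≅ A ⧸ (n)` and let `K ≤ C` be the image of `L'`. The ideal `K.colon univ`,
the annihilator of `C ⧸ K ≅ M ⧸ (N ⊔ L')`, equals `{a | a • x ∈ K}` for every `x` generating `C`
modulo `K`; let `n₁` be its monic generator. Taking for `x` the class of `z` gives
`{a | a • z ∈ N ⊔ L'} = (n₁)`, so some `n₁ • z + l` with `l ∈ L'` lies in `N`, and it generates
`N` modulo `N ⊓ L'`. Taking for `x` a generator `c` of `C` gives `K = A ∙ n₁ • c ≅ A ⧸ (n / n₁)`.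
The sum is direct because `z` is torsion-free and `L' ⊓ A ∙ z = ⊥`. -/

theorem Polynomial.exists_monic_and_eq_span_singleton {K : Type*} [Field K] {I : Ideal K[X]}
    (hI : I ≠ ⊥) : ∃ p : K[X], p.Monic ∧ I = Ideal.span {p} := by
  obtain ⟨g, rfl⟩ := (IsPrincipalIdealRing.principal I).principal
  have hg : g ≠ 0 := by
    rintro rfl
    exact hI (by simp)
  exact ⟨g * C g.leadingCoeff⁻¹, monic_mul_leadingCoeff_inv hg,
    (Ideal.span_singleton_mul_right_unit (isUnit_C.mpr (by simpa using hg)) g).symm⟩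

namespace Submodule

variable {R M : Type*} [CommRing R] [AddCommGroup M] [Module R M]

theorem smul_mem_iff_mem_colon_univ {K : Submodule R M} {x : M} (hx : K ⊔ R ∙ x = ⊤) {a : R} :
    a • x ∈ K ↔ a ∈ K.colon Set.univ := by
  refine ⟨fun ha => mem_colon.mpr fun y _ => ?_, fun ha => mem_colon.mp ha x trivial⟩
  obtain ⟨k, hk, _, hb, rfl⟩ := mem_sup.mp (hx ▸ mem_top : y ∈ K ⊔ R ∙ x)
  obtain ⟨b, rfl⟩ := mem_span_singleton.mp hb
  rw [smul_add, smul_comm]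
  exact add_mem (K.smul_mem a hk) (K.smul_mem b ha)

theorem span_singleton_symm_mk_one_eq_top {I : Ideal R} (e : M ≃ₗ[R] R ⧸ I) :
    R ∙ e.symm (Submodule.Quotient.mk 1) = ⊤ := by
  refine eq_top_iff.mpr fun x _ => mem_span_singleton.mpr ?_
  obtain ⟨a, ha⟩ := Quotient.mk_surjective _ (e x)
  refine ⟨a, ?_⟩
  rw [← map_smul, ← Quotient.mk_smul, smul_eq_mul, mul_one, ha, LinearEquiv.symm_apply_apply]

theorem torsionOf_symm_mk_one {I : Ideal R} (e : M ≃ₗ[R] R ⧸ I) :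
    Ideal.torsionOf R M (e.symm (Submodule.Quotient.mk 1)) = I := by
  ext a
  rw [Ideal.mem_torsionOf_iff, ← map_smul, LinearEquiv.map_eq_zero_iff, ← Quotient.mk_smul,
    smul_eq_mul, mul_one, Quotient.mk_eq_zero]

theorem eq_span_singleton_smul_of_smul_mem_iff {c : M} (hc : R ∙ c = ⊤) {K : Submodule R M}
    {d : R} (hK : ∀ a : R, a • c ∈ K ↔ d ∣ a) : K = R ∙ (d • c) := by
  refine le_antisymm (fun x _ => ?_) ((span_singleton_le_iff_mem _ _).mpr ((hK d).mpr dvd_rfl))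
  obtain ⟨a, rfl⟩ := mem_span_singleton.mp (hc ▸ mem_top : x ∈ R ∙ c)
  obtain ⟨b, rfl⟩ := (hK a).mp ‹_›
  exact mem_span_singleton.mpr ⟨b, by rw [smul_smul, mul_comm]⟩

theorem torsionOf_smul_eq_span_singleton [IsDomain R] {c : M} {d e : R} (hd : d ≠ 0)
    (hc : Ideal.torsionOf R M c = Ideal.span {d * e}) :
    Ideal.torsionOf R M (d • c) = Ideal.span {e} := by
  ext a
  rw [Ideal.mem_torsionOf_iff, smul_smul, ← Ideal.mem_torsionOf_iff, hc,
    Ideal.mem_span_singleton, Ideal.mem_span_singleton, mul_comm a d, mul_dvd_mul_iff_left hd]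

theorem map_mkQ_sup_span_singleton_eq_top {L : Submodule R M} {z : M} (hL : L ⊔ R ∙ z = ⊤)
    (N : Submodule R M) : L.map N.mkQ ⊔ R ∙ N.mkQ z = ⊤ := by
  rw [← Set.image_singleton, ← map_span, ← map_sup, hL, map_top, range_mkQ]

noncomputable def quotientComapSubtypeEquivMapMkQ (L N : Submodule R M) :
    (L ⧸ N.comap L.subtype) ≃ₗ[R] L.map N.mkQ :=
  (quotEquivOfEq _ _ (by rw [LinearMap.ker_comp, ker_mkQ])).trans
    ((N.mkQ ∘ₗ L.subtype).quotKerEquivRange.trans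
      (LinearEquiv.ofEq _ _ (by rw [LinearMap.range_comp, range_subtype])))

theorem eq_inf_sup_span_singleton_smul_add {L N : Submodule R M} {z l : M} {d : R}
    (hL : L ⊔ R ∙ z = ⊤) (hl : l ∈ L) (hw : d • z + l ∈ N)
    (hdvd : ∀ a : R, a • z ∈ N ⊔ L → d ∣ a) : N = N ⊓ L ⊔ R ∙ (d • z + l) := by
  refine le_antisymm (fun x hx => ?_) (sup_le inf_le_left ((span_singleton_le_iff_mem _ _).mpr hw))
  obtain ⟨y, hy, _, hu, rfl⟩ := mem_sup.mp (hL ▸ mem_top : x ∈ L ⊔ R ∙ z)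
  obtain ⟨a, rfl⟩ := mem_span_singleton.mp hu
  obtain ⟨b, rfl⟩ := hdvd a (by
    simpa using sub_mem (mem_sup_left hx : y + a • z ∈ N ⊔ L) (mem_sup_right hy))
  have hdecomp : y + (d * b) • z = (y - b • l) + b • (d • z + l) := by
    rw [smul_add, smul_smul, mul_comm]; abel
  rw [hdecomp] at hx ⊢
  have hyN : y - b • l ∈ N := by
    have := sub_mem hx (N.smul_mem b hw)
    rwa [add_sub_cancel_right] at this
  exact add_mem_sup ⟨hyN, sub_mem hy (L.smul_mem b hl)⟩
    (smul_mem _ b (mem_span_singleton_self _))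

theorem disjoint_span_singleton_smul_add [IsDomain R] [Module.IsTorsionFree R M]
    {L : Submodule R M} {z l : M} {d : R} (hL : Disjoint L (R ∙ z)) (hz : z ≠ 0) (hd : d ≠ 0)
    (hl : l ∈ L) : Disjoint L (R ∙ (d • z + l)) := by
  refine disjoint_def.mpr fun x hx hxw => ?_
  obtain ⟨c, rfl⟩ := mem_span_singleton.mp hxw
  have hcdz : (c * d) • z ∈ L := by
    have : (c * d) • z = c • (d • z + l) - c • l := by rw [smul_add, smul_smul]; abel
    exact this ▸ sub_mem hx (L.smul_mem c hl)
  have hc : c = 0 := by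
    simpa [hz, hd] using disjoint_def.mp hL _ hcdz (smul_mem _ _ (mem_span_singleton_self z))
  rw [hc, zero_smul]

end Submodule

theorem sublattice_decomposition_general
    (Fq : Type*) [Field Fq]
    (r : ℕ) (hr : 1 ≤ r)
    (M : Type*) [AddCommGroup M] [Module (Polynomial Fq) M]
    [Module.Free (Polynomial Fq) M]
    (hrankM : Module.finrank (Polynomial Fq) M = r)
    (L' : Submodule (Polynomial Fq) M)
    (hrankL' : Module.finrank (Polynomial Fq) L' = r - 1)
    (z : M)
    (hcompl : IsCompl L' (Submodule.span (Polynomial Fq) {z}))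
    (n : Polynomial Fq) (hn : n.Monic)
    (N : Submodule (Polynomial Fq) M)
    (hN : Nonempty ((M ⧸ N) ≃ₗ[Polynomial Fq] (Polynomial Fq ⧸ Ideal.span {n}))) :
    ∃ n₁ n₂ : Polynomial Fq, n₁.Monic ∧ n₂.Monic ∧ n = n₁ * n₂ ∧
      ∃ l ∈ L',
        Nonempty ((↥L' ⧸ N.comap L'.subtype) ≃ₗ[Polynomial Fq]
            (Polynomial Fq ⧸ Ideal.span {n₂})) ∧
        N = (N ⊓ L') ⊔ Submodule.span (Polynomial Fq) {n₁ • z + l} ∧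
        (N ⊓ L') ⊓ Submodule.span (Polynomial Fq) {n₁ • z + l} = ⊥ := by
  have hz : z ≠ 0 := by
    rintro rfl
    have hL' : L' = ⊤ := by simpa using hcompl.sup_eq_top
    rw [hL', finrank_top, hrankM] at hrankL'
    omega
  obtain ⟨e⟩ := hN
  set K := L'.map N.mkQ
  set c := e.symm (Submodule.Quotient.mk 1)
  have hc := span_singleton_symm_mk_one_eq_top e
  have hcn : Ideal.torsionOf _ _ c = Ideal.span {n} := torsionOf_symm_mk_one e
  have hKc : K ⊔ Fq[X] ∙ c = ⊤ := by rw [hc, sup_top_eq]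
  have hKz := map_mkQ_sup_span_singleton_eq_top hcompl.sup_eq_top N
  have hnc : n • c ∈ K :=
    (Ideal.mem_torsionOf_iff _ _).mp (hcn ▸ Ideal.mem_span_singleton_self n) ▸ K.zero_mem
  obtain ⟨n₁, hn₁, hI⟩ := exists_monic_and_eq_span_singleton <|
    (Submodule.ne_bot_iff _).mpr ⟨n, (smul_mem_iff_mem_colon_univ hKc).mp hnc, hn.ne_zero⟩
  have hKc' : ∀ a, a • c ∈ K ↔ n₁ ∣ a := fun a => by
    rw [smul_mem_iff_mem_colon_univ hKc, hI, Ideal.mem_span_singleton]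
  have hKz' : ∀ a, a • z ∈ N ⊔ L' ↔ n₁ ∣ a := fun a => by
    rw [← comap_map_mkQ, mem_comap, map_smul, smul_mem_iff_mem_colon_univ hKz, hI,
      Ideal.mem_span_singleton]
  obtain ⟨n₂, rfl⟩ : n₁ ∣ n := (hKc' n).mp hnc
  obtain ⟨y, hy, l, hl, hyl⟩ := mem_sup.mp ((hKz' n₁).mpr dvd_rfl)
  have hw : n₁ • z + -l ∈ N := by rwa [← hyl, add_neg_cancel_right]
  refine ⟨n₁, n₂, hn₁, hn₁.of_mul_monic_left hn, rfl, -l, neg_mem hl, ⟨?_⟩, ?_, ?_⟩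
  · exact (quotientComapSubtypeEquivMapMkQ L' N).trans <|
      (LinearEquiv.ofEq _ _ (eq_span_singleton_smul_of_smul_mem_iff hc hKc')).trans <|
      (Ideal.quotTorsionOfEquivSpanSingleton _ _ _).symm.trans <|
      quotEquivOfEq _ _ (torsionOf_smul_eq_span_singleton hn₁.ne_zero hcn)
  · exact eq_inf_sup_span_singleton_smul_add hcompl.sup_eq_top (neg_mem hl) hw
      fun a => (hKz' a).mp
  · exact disjoint_iff.mp <| (disjoint_span_singleton_smul_add hcompl.disjoint hz
      hn₁.ne_zero (neg_mem hl)).mono_left inf_le_right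

theorem sublattice_decomposition
    (Fq : Type*) [Field Fq] [Fintype Fq]
    (r : ℕ) (hr : 1 ≤ r)
    (M : Type*) [AddCommGroup M] [Module (Polynomial Fq) M]
    [Module.Free (Polynomial Fq) M] [Module.Finite (Polynomial Fq) M]
    (hrankM : Module.finrank (Polynomial Fq) M = r)
    (L' : Submodule (Polynomial Fq) M)
    (hrankL' : Module.finrank (Polynomial Fq) L' = r - 1)
    (z : M)
    (hcompl : IsCompl L' (Submodule.span (Polynomial Fq) {z}))
    (n : Polynomial Fq) (hn : n.Monic)
    (N : Submodule (Polynomial Fq) M)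
    (hN : Nonempty ((M ⧸ N) ≃ₗ[Polynomial Fq] (Polynomial Fq ⧸ Ideal.span {n}))) :
    ∃ n₁ n₂ : Polynomial Fq, n₁.Monic ∧ n₂.Monic ∧ n = n₁ * n₂ ∧
      ∃ l ∈ L',
        Nonempty ((↥L' ⧸ N.comap L'.subtype) ≃ₗ[Polynomial Fq]
            (Polynomial Fq ⧸ Ideal.span {n₂})) ∧
        N = (N ⊓ L') ⊔ Submodule.span (Polynomial Fq) {n₁ • z + l} ∧
        (N ⊓ L') ⊓ Submodule.span (Polynomial Fq) {n₁ • z + l} = ⊥ :=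
  sublattice_decomposition_general Fq r hr M hrankM L' hrankL' z hcompl n hn N hN
end

section
/- Let p be a prime, q a power of p, F_q the field with q elements, and F a field extension of F_q (so F has characteristic p). Let V ⊆ F be a finite F_q-subspace of F, and let k ≥ 1 be an integer not divisible by q − 1. Then ∑_{0 ≠ v ∈ V} v^{−k} = 0. -/
/-!
Scaling by a unit `u` of `F_q` permutes `V \ {0}` and multiplies each term `v^{-k}` by `u^{-k}`,
so the sum `S` satisfies `S = u^{-k} S`. Since `F_qˣ` is cyclic of order `q - 1` and `q - 1 ∤ k`,
some `u` has `u^k ≠ 1`, forcing `S = 0`.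
-/

theorem IsCyclic.exists_pow_ne_one {G : Type*} [Group G] [IsCyclic G] {k : ℕ}
    (h : ¬ Nat.card G ∣ k) : ∃ g : G, g ^ k ≠ 1 := by
  by_contra! hG
  exact h (IsCyclic.exponent_eq_card (α := G) ▸ Monoid.exponent_dvd_of_forall_pow_eq_one hG)

theorem finsum_mem_inv_pow_eq_zero_of_bijOn_mul {F : Type*} [Field F] {s : Set F} {c : F} {k : ℕ}
    (hs : Set.BijOn (c * ·) s s) (hc : c ^ k ≠ 1) : ∑ᶠ v ∈ s, (v ^ k)⁻¹ = 0 := by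
  have hscale : (c ^ k)⁻¹ * ∑ᶠ v ∈ s, (v ^ k)⁻¹ = ∑ᶠ v ∈ s, (v ^ k)⁻¹ := by
    simp_rw [mul_finsum_mem, ← mul_inv, ← mul_pow]
    exact finsum_mem_eq_of_bijOn _ hs fun _ _ => rfl
  by_contra hS
  exact hc (inv_eq_one.mp ((mul_eq_right₀ hS).mp hscale))

namespace Submodule

variable {K F : Type*} [CommSemiring K] [Semiring F] [Algebra K F] (V : Submodule K F)

theorem mapsTo_algebraMap_mul_diff_zero (u : Kˣ) :
    Set.MapsTo (algebraMap K F u * ·) ((V : Set F) \ {0}) ((V : Set F) \ {0}) := by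
  rintro v ⟨hvV, hv0⟩
  refine ⟨?_, ?_⟩
  · simpa [← Algebra.smul_def] using V.smul_mem (u : K) hvV
  · simpa [(u.isUnit.map (algebraMap K F)).mul_right_eq_zero] using hv0

theorem bijOn_algebraMap_mul_diff_zero (u : Kˣ) :
    Set.BijOn (algebraMap K F u * ·) ((V : Set F) \ {0}) ((V : Set F) \ {0}) := by
  have hinv (u : Kˣ) (v : F) : algebraMap K F ↑u⁻¹ * (algebraMap K F u * v) = v := by
    rw [← mul_assoc, ← map_mul, Units.inv_mul, map_one, one_mul]
  refine Set.InvOn.bijOn (f' := (algebraMap K F ↑u⁻¹ * ·)) ⟨fun v _ => hinv u v, fun v _ => ?_⟩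
    (V.mapsTo_algebraMap_mul_diff_zero u) (V.mapsTo_algebraMap_mul_diff_zero u⁻¹)
  simpa using hinv u⁻¹ v

end Submodule

theorem eisenstein_sum_vanishes_general
    (Fq : Type*) [Field Fq] [Fintype Fq] (q : ℕ) (hq : Fintype.card Fq = q)
    (F : Type*) [Field F] [Algebra Fq F]
    (V : Submodule Fq F)
    (k : ℕ) (hdvd : ¬ (q - 1) ∣ k) :
    ∑ᶠ v ∈ ((V : Set F) \ {0}), (v ^ k)⁻¹ = 0 := by
  obtain ⟨u, hu⟩ : ∃ u : Fqˣ, u ^ k ≠ 1 := IsCyclic.exists_pow_ne_one <| by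
    rwa [Nat.card_units, Nat.card_eq_fintype_card, hq]
  refine finsum_mem_inv_pow_eq_zero_of_bijOn_mul (V.bijOn_algebraMap_mul_diff_zero u) ?_
  rw [← map_pow, ← Units.val_pow_eq_pow_val, ← map_one (algebraMap Fq F),
    (algebraMap Fq F).injective.ne_iff]
  exact fun h => hu (Units.ext h)

theorem eisenstein_sum_vanishes
    (Fq : Type*) [Field Fq] [Fintype Fq] (q : ℕ) (hq : Fintype.card Fq = q)
    (F : Type*) [Field F] [Algebra Fq F]
    (V : Submodule Fq F) (hV : (V : Set F).Finite)
    (k : ℕ) (hk : 1 ≤ k) (hdvd : ¬ (q - 1) ∣ k) :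
    ∑ᶠ v ∈ ((V : Set F) \ {0}), (v ^ k)⁻¹ = 0 :=
  eisenstein_sum_vanishes_general Fq q hq F V k hdvd
end

section
/- Let p be a prime, q a power of p, and F_q the field with q elements. For every k ≥ 1 there exists a polynomial F_k ∈ F_q[T][X_1, …, X_k] with the following property: for every field extension F of F_q, every F_q-algebra homomorphism φ : F_q[T] → F with t = φ(T), every s ≥ 1, every g_1, …, g_s ∈ F and every sequence (e_i)_{i≥0} in F with e_0 = 1 satisfying the formal power series identity e(t·z) = t·e(z) + ∑_{j=1}^{s} g_j e(z)^{q^j} in F[[z]] (where e(z) = ∑_{i≥0} e_i z^{q^i}), one has g_k = (φ F_k)(e_1, …, e_k), i.e. the image under φ of the coefficients of F_k evaluated at (e_1, …, e_k) equals g_k (with g_k interpreted as 0 for k > s). -/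
/-!
Comparing the coefficients of `z ^ q ^ n` in the functional equation, and using that in
characteristic `p` the coefficient of `z ^ q ^ n` in `E ^ q ^ j` is `e (n - j) ^ q ^ j`, gives
`t ^ q ^ n * e n = t * e n + ∑ j ∈ [1, n], g j * e (n - j) ^ q ^ j`. As `e 0 = 1`, the term
`j = n` is `g n`, so `g n` is determined recursively by `t` and `e 1, …, e n`; running this
recursion over `𝔽_q[T][X_1, X_2, …]` produces the universal polynomials.
-/

open PowerSeries

theorem PowerSeries.coeff_pow_expChar_pow {R : Type*} [CommRing R] (p : ℕ) [ExpChar R p]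
    (f : R⟦X⟧) (l n : ℕ) :
    coeff n (f ^ p ^ l) = if p ^ l ∣ n then coeff (n / p ^ l) f ^ p ^ l else 0 := by
  have hp := expChar_ne_zero R p
  rw [← MvPowerSeries.map_iterateFrobenius_expand p hp f l]
  change coeff n (map (iterateFrobenius R p l) (expand (p ^ l) _ f)) = _
  rw [coeff_map, coeff_expand]
  split_ifs
  · rfl
  · exact zero_pow (pow_ne_zero l hp)

theorem PowerSeries.coeff_pow_pow_pow_of_expChar {R : Type*} [CommRing R] {p q : ℕ}
    [ExpChar R p] {m : ℕ} (hq : q = p ^ m) (hq1 : 1 < q) (f : R⟦X⟧) (n j : ℕ) :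
    coeff (q ^ n) (f ^ q ^ j) = if j ≤ n then coeff (q ^ (n - j)) f ^ q ^ j else 0 := by
  have hqj : q ^ j = p ^ (m * j) := by rw [hq, pow_mul]
  rw [hqj, coeff_pow_expChar_pow, ← hqj]
  by_cases h : j ≤ n
  · rw [if_pos (pow_dvd_pow q h), if_pos h, Nat.pow_div h (by omega)]
  · rw [if_neg (mt (Nat.pow_dvd_pow_iff_le_right hq1).mp h), if_neg h]

section DrinfeldExponential

variable {F : Type*} [CommRing F] {p q m : ℕ} [ExpChar F p] {t : F} {s : ℕ} {g e : ℕ → F}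
  {E : F⟦X⟧}

theorem drinfeld_coeff_recursion (hq : q = p ^ m) (hq1 : 1 < q) (hg : ∀ j, s < j → g j = 0)
    (he0 : e 0 = 1) (hE : ∀ i, coeff (q ^ i) E = e i)
    (hfe : rescale t E = C t * E + ∑ j ∈ Finset.Icc 1 s, C (g j) * E ^ q ^ j)
    {n : ℕ} (hn : 1 ≤ n) :
    g n = (t ^ q ^ n - t) * e n - ∑ j ∈ Finset.Ico 1 n, g j * e (n - j) ^ q ^ j := by
  have h := congrArg (coeff (q ^ n)) hfe
  simp only [coeff_rescale, map_add, map_sum, coeff_C_mul, hE,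
    coeff_pow_pow_pow_of_expChar hq hq1, mul_ite, mul_zero] at h
  have hsum : ∑ j ∈ Finset.Icc 1 s, (if j ≤ n then g j * e (n - j) ^ q ^ j else 0) =
      ∑ j ∈ Finset.Ico 1 (n + 1), g j * e (n - j) ^ q ^ j := by
    rw [← Finset.sum_filter]
    refine Finset.sum_subset (fun j hj => ?_) (fun j hj hj' => ?_)
    · simp only [Finset.mem_filter, Finset.mem_Icc, Finset.mem_Ico] at hj ⊢
      omega
    · simp only [Finset.mem_filter, Finset.mem_Icc, Finset.mem_Ico] at hj hj'
      rw [hg j (by omega), zero_mul]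
  rw [hsum, Finset.sum_Ico_succ_top hn, Nat.sub_self, he0, one_pow, mul_one] at h
  linear_combination -h

end DrinfeldExponential

section UniversalPolynomial

variable (A : Type*) [CommRing A] (q : ℕ)

noncomputable def drinfeldCoeffPoly (n : ℕ) : MvPolynomial ℕ (Polynomial A) :=
  MvPolynomial.C (Polynomial.X ^ q ^ n - Polynomial.X) * MvPolynomial.X n -
    ∑ j ∈ (Finset.Ico 1 n).attach, drinfeldCoeffPoly j.1 * MvPolynomial.X (n - j.1) ^ q ^ j.1
termination_by n
decreasing_by exact (Finset.mem_Ico.mp j.2).2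

theorem drinfeldCoeffPoly_eq (n : ℕ) :
    drinfeldCoeffPoly A q n =
      MvPolynomial.C (Polynomial.X ^ q ^ n - Polynomial.X) * MvPolynomial.X n -
        ∑ j ∈ Finset.Ico 1 n, drinfeldCoeffPoly A q j * MvPolynomial.X (n - j) ^ q ^ j := by
  rw [drinfeldCoeffPoly, Finset.sum_attach (Finset.Ico 1 n)
    fun j => drinfeldCoeffPoly A q j * MvPolynomial.X (n - j) ^ q ^ j]

variable {A q} {F : Type*} [CommRing F] (ψ : Polynomial A →+* F) {g e : ℕ → F}

theorem eval_map_drinfeldCoeffPoly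
    (hrec : ∀ n, 1 ≤ n → g n = (ψ Polynomial.X ^ q ^ n - ψ Polynomial.X) * e n -
      ∑ j ∈ Finset.Ico 1 n, g j * e (n - j) ^ q ^ j)
    {n : ℕ} (hn : 1 ≤ n) {w : ℕ → F} (hw : ∀ i, 1 ≤ i → i ≤ n → w i = e i) :
    MvPolynomial.eval w (MvPolynomial.map ψ (drinfeldCoeffPoly A q n)) = g n := by
  induction n using Nat.strong_induction_on with
  | _ n ih =>
    rw [drinfeldCoeffPoly_eq, hrec n hn]
    simp only [map_sub, map_mul, map_sum, map_pow, MvPolynomial.map_C, MvPolynomial.map_X,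
      MvPolynomial.eval_C, MvPolynomial.eval_X, hw n hn le_rfl]
    congr 1
    refine Finset.sum_congr rfl fun j hj => ?_
    rw [Finset.mem_Ico] at hj
    rw [ih j hj.2 hj.1 fun i hi hij => hw i hi (by omega), hw (n - j) (by omega) (by omega)]

end UniversalPolynomial

theorem drinfeld_coeff_universal_polynomial
    (Fq : Type*) [Field Fq] [Fintype Fq] (q : ℕ) (hq : Fintype.card Fq = q)
    (k : ℕ) (hk : 1 ≤ k) :
    ∃ Fk : MvPolynomial (Fin k) (Polynomial Fq),
      ∀ (F : Type) [Field F] [Algebra Fq F] (φ : Polynomial Fq →ₐ[Fq] F)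
        (s : ℕ) (_ : 1 ≤ s)
        (g : ℕ → F) (_ : ∀ j, s < j → g j = 0)
        (e : ℕ → F) (_ : e 0 = 1)
        (E : PowerSeries F)
        (_ : ∀ i, PowerSeries.coeff (q ^ i) E = e i)
        (_ : ∀ m, (∀ i, m ≠ q ^ i) → PowerSeries.coeff m E = 0)
        (_ : PowerSeries.rescale (φ Polynomial.X) E
            = PowerSeries.C (φ Polynomial.X) * E
              + ∑ j ∈ Finset.Icc 1 s, PowerSeries.C (g j) * E ^ q ^ j),
        g k = MvPolynomial.eval (fun i : Fin k => e (i.1 + 1))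
                (MvPolynomial.map (φ : Polynomial Fq →+* F) Fk) := by
  obtain ⟨p, _, m, hp, hpm⟩ := FiniteField.card' Fq
  have : Fact p.Prime := ⟨hp⟩
  have hq1 : 1 < q := hq ▸ Fintype.one_lt_card
  -- the variable `n` of `drinfeldCoeffPoly` stands for `e n`, hence becomes `n - 1 : Fin k`
  refine ⟨MvPolynomial.rename (fun n => (⟨min (n - 1) (k - 1), by omega⟩ : Fin k))
    (drinfeldCoeffPoly Fq q k), ?_⟩
  intro F _ _ φ s _ g hg e he0 E hE _ hfe
  have : ExpChar F p := expChar_of_injective_algebraMap (algebraMap Fq F).injective p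
  rw [MvPolynomial.map_rename, MvPolynomial.eval_rename]
  refine (eval_map_drinfeldCoeffPoly _
    (fun n hn => drinfeld_coeff_recursion (hpm ▸ hq).symm hq1 hg he0 hE hfe hn) hk
    fun i hi hik => ?_).symm
  simp only [Function.comp_apply]
  congr 1
  omega
end

section
/- Let p be a prime, q a power of p, and F_q the field with q elements. For every k ≥ 1 there exists a polynomial G_k ∈ F_q[X_1, …, X_k] with the following property: for every field extension F of F_q and all sequences (e_i)_{i≥0}, (E_j)_{j≥0} in F with e_0 = 1, E_0 = −1, satisfying (i) (∑_{i≥0} e_i z^{q^i − 1}) · (∑_{j≥0} E_j z^j) = −1 in F[[z]] and (ii) E_{jq} = E_j^q for all j ≥ 0, one has e_k = G_k(E_{q−1}, E_{q^2−1}, …, E_{q^k−1}). -/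
/-!
Comparing coefficients of `z^(q^k - 1)` in `(∑ e_i z^(q^i - 1)) · (∑ E_j z^j) = -1` gives
`∑_{i ≤ k} e_i E_{q^k - q^i} = 0` for `k ≥ 1`. Since `E_0 = -1` and
`E_{q^k - q^i} = E_{(q^(k-i) - 1) q^i} = E_{q^(k-i) - 1}^(q^i)`, this is the recursion
`e_k = ∑_{i < k} e_i E_{q^(k-i) - 1}^(q^i)`, which does not depend on `F`; unfolding it defines
`G_k` over `F_q` once and for all.
-/

open PowerSeries

theorem apply_mul_pow_of_apply_mul {M : Type*} [Monoid M] {q : ℕ} {f : ℕ → M}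
    (hf : ∀ j, f (j * q) = f j ^ q) (j i : ℕ) : f (j * q ^ i) = f j ^ q ^ i := by
  induction i with
  | zero => simp
  | succ i ih => rw [pow_succ, ← mul_assoc, hf, ih, ← pow_mul, ← pow_succ]

theorem Nat.pow_sub_one_injective {q : ℕ} (hq : 2 ≤ q) :
    Function.Injective fun i : ℕ => q ^ i - 1 := fun i j hij =>
  Nat.pow_right_injective hq <| show q ^ i = q ^ j by
    have := Nat.one_le_pow i q (by omega)
    have := Nat.one_le_pow j q (by omega)
    simp only at hij
    omega

theorem coeff_pow_sub_one_mul_mk {F : Type*} [Semiring F] {q : ℕ} (hq : 2 ≤ q) {e E : ℕ → F}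
    {D : F⟦X⟧} (hD : ∀ i, coeff (q ^ i - 1) D = e i)
    (hD₀ : ∀ m, (∀ i, m ≠ q ^ i - 1) → coeff m D = 0) (k : ℕ) :
    coeff (q ^ k - 1) (D * mk E) = ∑ i ∈ Finset.range (k + 1), e i * E (q ^ k - q ^ i) := by
  have hpos : ∀ i, 1 ≤ q ^ i := fun i => Nat.one_le_pow i q (by omega)
  have hsupp : (Finset.range (k + 1)).image (fun i => q ^ i - 1) ⊆
      Finset.range (q ^ k - 1 + 1) := by
    intro m hm
    obtain ⟨i, hi, rfl⟩ := Finset.mem_image.mp hm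
    have := Nat.pow_le_pow_right (by omega : 0 < q) (Finset.mem_range_succ_iff.mp hi)
    rw [Finset.mem_range]
    omega
  rw [coeff_mul, Finset.Nat.sum_antidiagonal_eq_sum_range_succ_mk, ← Finset.sum_subset hsupp,
    Finset.sum_image (Nat.pow_sub_one_injective hq).injOn]
  · refine Finset.sum_congr rfl fun i _ => ?_
    rw [hD, coeff_mk]
    congr 2
    have := hpos i
    omega
  · intro m hm hm_not_image
    refine mul_eq_zero_of_left (hD₀ m fun i hmi => hm_not_image ?_) _
    subst hmi
    refine Finset.mem_image.mpr ⟨i, Finset.mem_range_succ_iff.mpr ?_, rfl⟩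
    by_contra! hki
    have := Nat.pow_lt_pow_right (by omega : 1 < q) hki
    have := hpos k
    rw [Finset.mem_range] at hm
    omega

theorem eq_sum_mul_pow_of_mul_mk_eq_neg_one {F : Type*} [Ring F] {q : ℕ} (hq : 2 ≤ q)
    {e E : ℕ → F} {D : F⟦X⟧} (hD : ∀ i, coeff (q ^ i - 1) D = e i)
    (hD₀ : ∀ m, (∀ i, m ≠ q ^ i - 1) → coeff m D = 0) (hmul : D * mk E = -1)
    (hE : ∀ j, E (j * q) = E j ^ q) (hE₀ : E 0 = -1) {k : ℕ} (hk : 1 ≤ k) :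
    e k = ∑ i ∈ Finset.range k, e i * E (q ^ (k - i) - 1) ^ q ^ i := by
  have hcoeff : ∑ i ∈ Finset.range (k + 1), e i * E (q ^ k - q ^ i) = 0 := by
    have : q ^ k - 1 ≠ 0 := Nat.sub_ne_zero_of_lt (Nat.one_lt_pow (by omega) (by omega))
    rw [← coeff_pow_sub_one_mul_mk hq hD hD₀, hmul, map_neg, coeff_one, if_neg this, neg_zero]
  rw [Finset.sum_range_succ, Nat.sub_self, hE₀, mul_neg_one, add_neg_eq_zero] at hcoeff
  rw [← hcoeff]
  refine Finset.sum_congr rfl fun i hi => ?_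
  have hki : q ^ k - q ^ i = (q ^ (k - i) - 1) * q ^ i := by
    rw [Nat.sub_one_mul, ← pow_add, Nat.sub_add_cancel (Finset.mem_range.mp hi).le]
  rw [hki, apply_mul_pow_of_apply_mul hE]

/-- The variable `X j` stands for `E_{q^(j+1) - 1}`, so that `X (Fin.rev i)` is
`E_{q^(k-i) - 1}` for `k = n + 1`. -/
noncomputable def expCoeffPoly (R : Type*) [CommSemiring R] (q : ℕ) :
    (k : ℕ) → MvPolynomial (Fin k) R
  | 0 => 1
  | n + 1 => ∑ i : Fin (n + 1),
      MvPolynomial.rename (Fin.castLE i.2.le) (expCoeffPoly R q i) *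
        MvPolynomial.X (Fin.rev i) ^ q ^ (i : ℕ)

theorem eval_expCoeffPoly {R F : Type*} [CommSemiring R] [CommRing F] [Algebra R F] {q : ℕ}
    (hq : 2 ≤ q) {e E : ℕ → F} {D : F⟦X⟧} (hD : ∀ i, coeff (q ^ i - 1) D = e i)
    (hD₀ : ∀ m, (∀ i, m ≠ q ^ i - 1) → coeff m D = 0) (hmul : D * mk E = -1)
    (hE : ∀ j, E (j * q) = E j ^ q) (he₀ : e 0 = 1) (hE₀ : E 0 = -1) (k : ℕ) :
    e k = MvPolynomial.eval (fun i : Fin k => E (q ^ (i.1 + 1) - 1))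
      (MvPolynomial.map (algebraMap R F) (expCoeffPoly R q k)) := by
  induction k using Nat.strong_induction_on with
  | _ k ih =>
  cases k with
  | zero => simp [expCoeffPoly, he₀]
  | succ n =>
    rw [eq_sum_mul_pow_of_mul_mk_eq_neg_one hq hD hD₀ hmul hE hE₀ n.succ_pos, Finset.sum_range,
      expCoeffPoly]
    simp only [map_sum, map_mul, map_pow, MvPolynomial.map_rename, MvPolynomial.map_X,
      MvPolynomial.eval_rename, MvPolynomial.eval_X]
    refine Finset.sum_congr rfl fun i _ => ?_
    have hrev : (Fin.rev i : ℕ) + 1 = n + 1 - i := by rw [Fin.val_rev]; omega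
    rw [ih i i.2, hrev]
    rfl

theorem exponential_coeff_universal_polynomial_general
    (Fq : Type*) [Field Fq] [Fintype Fq] (q : ℕ) (hq : Fintype.card Fq = q)
    (k : ℕ) :
    ∃ Gk : MvPolynomial (Fin k) Fq,
      ∀ (F : Type) [Field F] [Algebra Fq F]
        (e Eis : ℕ → F) (_ : e 0 = 1) (_ : Eis 0 = -1)
        (D : PowerSeries F)
        (_ : ∀ i, PowerSeries.coeff (R := F) (q ^ i - 1) D = e i)
        (_ : ∀ m, (∀ i, m ≠ q ^ i - 1) → PowerSeries.coeff (R := F) m D = 0)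
        (_ : D * PowerSeries.mk Eis = -1)
        (_ : ∀ j, Eis (j * q) = Eis j ^ q),
        e k = MvPolynomial.eval (fun i : Fin k => Eis (q ^ (i.1 + 1) - 1))
                (MvPolynomial.map (algebraMap Fq F) Gk) := by
  have hq₂ : 2 ≤ q := hq ▸ Fintype.one_lt_card
  exact ⟨expCoeffPoly Fq q k, fun F _ _ e E he₀ hE₀ D hD hD₀ hmul hE =>
    eval_expCoeffPoly hq₂ hD hD₀ hmul hE he₀ hE₀ k⟩

theorem exponential_coeff_universal_polynomial
    (Fq : Type*) [Field Fq] [Fintype Fq] (q : ℕ) (hq : Fintype.card Fq = q)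
    (k : ℕ) (hk : 1 ≤ k) :
    ∃ Gk : MvPolynomial (Fin k) Fq,
      ∀ (F : Type) [Field F] [Algebra Fq F]
        (e Eis : ℕ → F) (_ : e 0 = 1) (_ : Eis 0 = -1)
        (D : PowerSeries F)
        (_ : ∀ i, PowerSeries.coeff (R := F) (q ^ i - 1) D = e i)
        (_ : ∀ m, (∀ i, m ≠ q ^ i - 1) → PowerSeries.coeff (R := F) m D = 0)
        (_ : D * PowerSeries.mk Eis = -1)
        (_ : ∀ j, Eis (j * q) = Eis j ^ q),
        e k = MvPolynomial.eval (fun i : Fin k => Eis (q ^ (i.1 + 1) - 1))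
                (MvPolynomial.map (algebraMap Fq F) Gk) :=
  exponential_coeff_universal_polynomial_general Fq q hq k
end

section
/- Let p be a prime, q a power of p, and F_q the field with q elements. For every k ≥ 1 there exists a polynomial H_k ∈ F_q[T][X_1, …, X_k] with the following property: for every field extension F of F_q, every F_q-algebra homomorphism φ : F_q[T] → F with t = φ(T), every s ≥ 1, all g_1, …, g_s ∈ F, and all sequences (e_i)_{i≥0}, (E_j)_{j≥0} in F with e_0 = 1, E_0 = −1, satisfying (i) e(t·z) = t·e(z) + ∑_{j=1}^{s} g_j e(z)^{q^j} in F[[z]] where e(z) = ∑_{i≥0} e_i z^{q^i}, (ii) (∑_{i≥0} e_i z^{q^i − 1}) · (∑_{j≥0} E_j z^j) = −1 in F[[z]], and (iii) E_{jq} = E_j^q for all j ≥ 0, one has g_k = (φ H_k)(E_{q−1}, E_{q^2−1}, …, E_{q^k−1}) (with g_k interpreted as 0 for k > s). -/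
open PowerSeries Finset

/-
Write `x n` for `E_{q^(n+1)-1}`. Comparing coefficients of `z^(q^(i+1)-1)` in
`D · ∑ E_j z^j = -1`, where `D` is supported on the exponents `q^j - 1` and
`E_{q^(i+1)-q^j} = x (i-j) ^ q^j` by the Frobenius relation, gives
`e_{i+1} = ∑_{j ≤ i} e_j · x (i-j) ^ q^j`. Since `q` is a power of the characteristic, the
coefficient of `z^(q^n)` in `e(z)^(q^i)` is `e_{n-i}^(q^i)`, so comparing coefficients of
`z^(q^(j+1))` in the functional equation gives
`g_{j+1} = e_{j+1} (t^(q^(j+1)) - t) - ∑_{1 ≤ i ≤ j} g_i e_{j+1-i}^(q^i)`.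
These two recursions have universal solutions over `F_q[T][x_0, …, x_{k-1}]` (only `x_n` with
`n < k` enter `g_k`), which specialise to `e_i` and `g_i` under `T ↦ t`, `x_n ↦ E_{q^(n+1)-1}`.
-/

namespace PowerSeries

variable {R : Type*} [CommRing R]

theorem coeff_pow_expChar_pow_s14 (p : ℕ) [ExpChar R p] (f : R⟦X⟧) (n m : ℕ) :
    coeff m (f ^ p ^ n) = if p ^ n ∣ m then coeff (m / p ^ n) f ^ p ^ n else 0 := by
  have hp : p ≠ 0 := expChar_ne_zero R p
  rw [← MvPowerSeries.map_iterateFrobenius_expand p hp f n]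
  change coeff m (map (iterateFrobenius R p n) (expand (p ^ n) (pow_ne_zero n hp) f)) = _
  rw [coeff_map, coeff_expand, apply_ite (iterateFrobenius R p n), map_zero,
    iterateFrobenius_def]

theorem coeff_pow_pow_pow {p r q : ℕ} [ExpChar R p] (hq : q = p ^ r) (hq1 : 1 < q)
    (f : R⟦X⟧) (n i : ℕ) :
    coeff (q ^ n) (f ^ q ^ i) = if i ≤ n then coeff (q ^ (n - i)) f ^ q ^ i else 0 := by
  have hqi : q ^ i = p ^ (r * i) := by rw [hq, pow_mul]
  rw [hqi, coeff_pow_expChar_pow_s14, ← hqi]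
  by_cases h : i ≤ n
  · rw [if_pos (pow_dvd_pow q h), if_pos h, Nat.pow_div h (by omega)]
  · rw [if_neg (by rwa [Nat.pow_dvd_pow_iff_le_right hq1]), if_neg h]

theorem coeff_mul_eq_sum_of_coeff_eq_zero {ι : Type*} {f : R⟦X⟧} {a : ι → ℕ}
    (ha : Function.Injective a) (hf : ∀ m, (∀ i, m ≠ a i) → coeff m f = 0)
    (g : R⟦X⟧) {n : ℕ} (s : Finset ι) (hs : ∀ i, i ∈ s ↔ a i ≤ n) :
    coeff n (f * g) = ∑ i ∈ s, coeff (a i) f * coeff (n - a i) g := by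
  rw [coeff_mul, Finset.Nat.sum_antidiagonal_eq_sum_range_succ (fun i j => coeff i f * coeff j g)]
  have hsub : s.image a ⊆ range (n + 1) := by
    intro m hm
    obtain ⟨i, hi, rfl⟩ := mem_image.mp hm
    exact mem_range.mpr (Nat.lt_succ_of_le ((hs i).mp hi))
  rw [← sum_subset hsub, sum_image ha.injOn]
  intro m hm hms
  rw [hf m, zero_mul]
  rintro i rfl
  exact hms (mem_image_of_mem a ((hs i).mpr (Nat.le_of_lt_succ (mem_range.mp hm))))

end PowerSeries

namespace Drinfeld

section Universal

variable {R S : Type*} [CommRing R] [CommRing S] (q : ℕ)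

noncomputable def expCoeffOfEisenstein (x : ℕ → R) : ℕ → R
  | 0 => 1
  | i + 1 => ∑ j ∈ (range (i + 1)).attach, expCoeffOfEisenstein x j * x (i - j) ^ q ^ (j : ℕ)
decreasing_by exact mem_range.mp j.2

/-- The value at `0` is a placeholder: `g_0` is not a coefficient of the Drinfeld module. -/
noncomputable def coeffOfEisenstein (t : R) (x : ℕ → R) : ℕ → R
  | 0 => 0
  | j + 1 => expCoeffOfEisenstein q x (j + 1) * (t ^ q ^ (j + 1) - t)
      - ∑ i ∈ (Icc 1 j).attach,
          coeffOfEisenstein t x i * expCoeffOfEisenstein q x (j + 1 - i) ^ q ^ (i : ℕ)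
decreasing_by exact Nat.lt_succ_of_le (mem_Icc.mp i.2).2

variable {q}

theorem expCoeffOfEisenstein_succ (x : ℕ → R) (i : ℕ) :
    expCoeffOfEisenstein q x (i + 1)
      = ∑ j ∈ range (i + 1), expCoeffOfEisenstein q x j * x (i - j) ^ q ^ j := by
  rw [expCoeffOfEisenstein,
    sum_attach (range (i + 1)) fun j => expCoeffOfEisenstein q x j * x (i - j) ^ q ^ j]

theorem coeffOfEisenstein_succ (t : R) (x : ℕ → R) (j : ℕ) :
    coeffOfEisenstein q t x (j + 1) = expCoeffOfEisenstein q x (j + 1) * (t ^ q ^ (j + 1) - t)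
      - ∑ i ∈ Icc 1 j,
          coeffOfEisenstein q t x i * expCoeffOfEisenstein q x (j + 1 - i) ^ q ^ i := by
  rw [coeffOfEisenstein, sum_attach (Icc 1 j) fun i =>
    coeffOfEisenstein q t x i * expCoeffOfEisenstein q x (j + 1 - i) ^ q ^ i]

theorem map_expCoeffOfEisenstein (f : R →+* S) (x : ℕ → R) (i : ℕ) :
    f (expCoeffOfEisenstein q x i) = expCoeffOfEisenstein q (f ∘ x) i := by
  induction i using Nat.strong_induction_on with
  | _ i ih =>
    cases i with
    | zero => simp [expCoeffOfEisenstein]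
    | succ i =>
      simp only [expCoeffOfEisenstein_succ, map_sum, map_mul, map_pow, Function.comp_apply]
      exact sum_congr rfl fun j hj => by rw [ih j (by simp at hj; omega)]

theorem map_coeffOfEisenstein (f : R →+* S) (t : R) (x : ℕ → R) (j : ℕ) :
    f (coeffOfEisenstein q t x j) = coeffOfEisenstein q (f t) (f ∘ x) j := by
  induction j using Nat.strong_induction_on with
  | _ j ih =>
    cases j with
    | zero => simp [coeffOfEisenstein]
    | succ j =>
      simp only [coeffOfEisenstein_succ, map_sub, map_sum, map_mul, map_pow,
        map_expCoeffOfEisenstein]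
      congr 1
      exact sum_congr rfl fun i hi => by rw [ih i (by simp at hi; omega)]

theorem eq_expCoeffOfEisenstein {x e : ℕ → R} {N : ℕ} (he0 : e 0 = 1)
    (he : ∀ i < N, e (i + 1) = ∑ j ∈ range (i + 1), e j * x (i - j) ^ q ^ j) :
    ∀ i ≤ N, e i = expCoeffOfEisenstein q x i := by
  intro i
  induction i using Nat.strong_induction_on with
  | _ i ih =>
    cases i with
    | zero => intro; simpa [expCoeffOfEisenstein] using he0
    | succ i =>
      intro hi
      rw [he i hi, expCoeffOfEisenstein_succ]
      exact sum_congr rfl fun j hj => by rw [ih j (by simp at hj; omega) (by simp at hj; omega)]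

theorem eq_coeffOfEisenstein {t : R} {x e g : ℕ → R} {N : ℕ}
    (he : ∀ i ≤ N, e i = expCoeffOfEisenstein q x i)
    (hg : ∀ j < N, g (j + 1) = e (j + 1) * (t ^ q ^ (j + 1) - t)
      - ∑ i ∈ Icc 1 j, g i * e (j + 1 - i) ^ q ^ i) :
    ∀ j, 1 ≤ j → j ≤ N → g j = coeffOfEisenstein q t x j := by
  intro j
  induction j using Nat.strong_induction_on with
  | _ j ih =>
    intro hj1 hjN
    obtain ⟨j, rfl⟩ := Nat.exists_eq_add_of_le' hj1
    rw [hg j hjN, coeffOfEisenstein_succ, he _ hjN]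
    congr 1
    refine sum_congr rfl fun i hi => ?_
    rw [mem_Icc] at hi
    rw [ih i (by omega) hi.1 (by omega), he _ (by omega)]

end Universal

theorem expCoeff_succ_of_mul_mk_eq_neg_one {F : Type*} [CommRing F] {q : ℕ} (hq : 1 < q)
    {e Eis : ℕ → F} {D : F⟦X⟧} (hD : ∀ i, coeff (q ^ i - 1) D = e i)
    (hD0 : ∀ m, (∀ i, m ≠ q ^ i - 1) → coeff m D = 0) (hDE : D * mk Eis = -1)
    (hEis0 : Eis 0 = -1) (hfrob : ∀ j, Eis (j * q) = Eis j ^ q) (i : ℕ) :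
    e (i + 1) = ∑ j ∈ range (i + 1), e j * Eis (q ^ (i - j + 1) - 1) ^ q ^ j := by
  have one_le_pow (n : ℕ) : 1 ≤ q ^ n := Nat.one_le_pow _ _ (by omega)
  have hfrob_pow (a n : ℕ) : Eis (a * q ^ n) = Eis a ^ q ^ n := by
    induction n with
    | zero => simp
    | succ n ih => rw [pow_succ, ← mul_assoc, hfrob, ih, ← pow_mul, ← pow_succ]
  have hinj : Function.Injective fun n => q ^ n - 1 := by
    intro a b hab
    have := one_le_pow a
    have := one_le_pow b
    exact Nat.pow_right_injective hq (show q ^ a = q ^ b by simp only at hab; omega)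
  have hcoeff := congrArg (coeff (q ^ (i + 1) - 1)) hDE
  rw [coeff_mul_eq_sum_of_coeff_eq_zero hinj hD0 _ (range (i + 2)) fun j => by
      rw [mem_range, Nat.lt_succ_iff, ← Nat.pow_le_pow_iff_right hq]
      have := one_le_pow j; have := one_le_pow (i + 1); omega,
    sum_range_succ] at hcoeff
  have hexp : ∀ j ∈ range (i + 1),
      e j * Eis (q ^ (i + 1) - 1 - (q ^ j - 1)) = e j * Eis (q ^ (i - j + 1) - 1) ^ q ^ j := by
    intro j hj
    have hij : i - j + 1 + j = i + 1 := by have := mem_range.mp hj; omega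
    have h : q ^ (i + 1) - 1 - (q ^ j - 1) = (q ^ (i - j + 1) - 1) * q ^ j := by
      rw [Nat.sub_mul, ← pow_add, hij, one_mul]
      have := one_le_pow j
      omega
    rw [h, hfrob_pow]
  have hne : q ^ (i + 1) - 1 ≠ 0 := Nat.sub_ne_zero_of_lt (Nat.one_lt_pow i.succ_ne_zero hq)
  simp only [hD, coeff_mk, Nat.sub_self, hEis0, map_neg, coeff_one, if_neg hne, neg_zero,
    sum_congr rfl hexp] at hcoeff
  linear_combination -hcoeff

theorem coeff_succ_of_rescale_eq {F : Type*} [CommRing F] {p r q : ℕ} [ExpChar F p]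
    (hq : q = p ^ r) (hq1 : 1 < q) {s : ℕ} {g e : ℕ → F} (hgs : ∀ j, s < j → g j = 0)
    (he0 : e 0 = 1) {E : F⟦X⟧} (hE : ∀ i, coeff (q ^ i) E = e i) {t : F}
    (hfunc : rescale t E = C t * E + ∑ j ∈ Icc 1 s, C (g j) * E ^ q ^ j) (j : ℕ) :
    g (j + 1) = e (j + 1) * (t ^ q ^ (j + 1) - t)
      - ∑ i ∈ Icc 1 j, g i * e (j + 1 - i) ^ q ^ i := by
  have hcoeff := congrArg (coeff (q ^ (j + 1))) hfunc
  simp only [coeff_rescale, map_add, map_sum, coeff_C_mul, coeff_pow_pow_pow hq hq1,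
    hE] at hcoeff
  have hsum : ∑ i ∈ Icc 1 s, g i * (if i ≤ j + 1 then e (j + 1 - i) ^ q ^ i else 0)
      = ∑ i ∈ Icc 1 (j + 1), g i * e (j + 1 - i) ^ q ^ i :=
    calc _ = ∑ i ∈ Icc 1 (s + (j + 1)),
            g i * (if i ≤ j + 1 then e (j + 1 - i) ^ q ^ i else 0) :=
          sum_subset (Icc_subset_Icc_right (by omega)) fun i hi hni => by
            rw [hgs i (by simp only [mem_Icc] at hi hni; omega), zero_mul]
      _ = ∑ i ∈ Icc 1 (j + 1), g i * (if i ≤ j + 1 then e (j + 1 - i) ^ q ^ i else 0) :=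
          (sum_subset (Icc_subset_Icc_right (by omega)) fun i hi hni => by
            rw [if_neg (by simp only [mem_Icc] at hi hni; omega), mul_zero]).symm
      _ = _ := sum_congr rfl fun i hi => by rw [if_pos (mem_Icc.mp hi).2]
  rw [hsum, sum_Icc_succ_top (by omega), Nat.sub_self, he0, one_pow, mul_one] at hcoeff
  linear_combination -hcoeff

end Drinfeld

theorem drinfeld_coeff_eisenstein_universal_polynomial
    (Fq : Type*) [Field Fq] [Fintype Fq] (q : ℕ) (hq : Fintype.card Fq = q)
    (k : ℕ) (hk : 1 ≤ k) :
    ∃ Hk : MvPolynomial (Fin k) (Polynomial Fq),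
      ∀ (F : Type) [Field F] [Algebra Fq F] (φ : Polynomial Fq →ₐ[Fq] F)
        (s : ℕ) (_ : 1 ≤ s)
        (g : ℕ → F) (_ : ∀ j, s < j → g j = 0)
        (e Eis : ℕ → F) (_ : e 0 = 1) (_ : Eis 0 = -1)
        (E : PowerSeries F)
        (_ : ∀ i, PowerSeries.coeff (q ^ i) E = e i)
        (_ : ∀ m, (∀ i, m ≠ q ^ i) → PowerSeries.coeff m E = 0)
        (_ : PowerSeries.rescale (φ Polynomial.X) E
            = PowerSeries.C (φ Polynomial.X) * E
              + ∑ j ∈ Finset.Icc 1 s, PowerSeries.C (g j) * E ^ q ^ j)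
        (D : PowerSeries F)
        (_ : ∀ i, PowerSeries.coeff (q ^ i - 1) D = e i)
        (_ : ∀ m, (∀ i, m ≠ q ^ i - 1) → PowerSeries.coeff m D = 0)
        (_ : D * PowerSeries.mk Eis = -1)
        (_ : ∀ j, Eis (j * q) = Eis j ^ q),
        g k = MvPolynomial.eval (fun i : Fin k => Eis (q ^ (i.1 + 1) - 1))
                (MvPolynomial.map (φ : Polynomial Fq →+* F) Hk) := by
  obtain ⟨p, _, r, hp, hcard⟩ := FiniteField.card' Fq
  have hqp : q = p ^ (r : ℕ) := hq ▸ hcard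
  have hq1 : 1 < q := hq ▸ Fintype.one_lt_card
  refine ⟨Drinfeld.coeffOfEisenstein q (MvPolynomial.C Polynomial.X)
    (fun n => if h : n < k then MvPolynomial.X ⟨n, h⟩ else 0) k, ?_⟩
  intro F _ _ φ s _ g hgs e Eis he0 hEis0 E hE _ hfunc D hD hD0 hDE hfrob
  have : ExpChar Fq p := .prime hp
  have : ExpChar F p := expChar_of_injective_algebraMap (algebraMap Fq F).injective p
  set x : ℕ → F := fun n => if n < k then Eis (q ^ (n + 1) - 1) else 0
  have he : ∀ i ≤ k, e i = Drinfeld.expCoeffOfEisenstein q x i :=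
    Drinfeld.eq_expCoeffOfEisenstein he0 fun i hi =>
      (Drinfeld.expCoeff_succ_of_mul_mk_eq_neg_one hq1 hD hD0 hDE hEis0 hfrob i).trans <|
        sum_congr rfl fun j _ => by
          have : i - j < k := by omega
          simp only [x, if_pos this]
  have hg := Drinfeld.eq_coeffOfEisenstein he fun j _ =>
    Drinfeld.coeff_succ_of_rescale_eq hqp hq1 hgs he0 hE hfunc j
  rw [hg k hk le_rfl, MvPolynomial.eval_map, ← MvPolynomial.coe_eval₂Hom,
    Drinfeld.map_coeffOfEisenstein, MvPolynomial.eval₂Hom_C]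
  congr 1
  funext n
  by_cases h : n < k <;> simp [x, h]
end
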